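/- The general solution of the nonhomogeneous equation y_t = Σ_{i=1}^p φ_i(t) y_{t−i} + v_t with prescribed values y_{s−p+1},...,y_s is given explicitly by y_t = Σ_{m=1}^p Σ_{j=1}^{p−m+1} φ_{m+j−1}(s+j) ξ_{t,s+j} y_{s−m+1} + Σ_{j=1}^{t−s} ξ_{t,s+j} v_{s+j} for all t > s. -/

import Mathlib

/-- The `k × k` banded lower Hessenberg matrix `Φ^{(m)}_{t,s}` (here `k = t - s`),
0-indexed: superdiagonal entries are `-1`; first-column entries (row `i`, 0-indexed) are
`φ_{i+m}(s+i+1)` when `i + m ≤ p` and `0` otherwise; for columns `j ≥ 1` (0-indexed) the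
`(i,j)` entry is `φ_{i-j+1}(s+i+1)` when `j ≤ i` and `i - j + 1 ≤ p`, and `0` otherwise. -/
def Phi (p : ℕ) (φ : ℕ → ℤ → ℂ) (m : ℕ) (s : ℤ) (k : ℕ) :
    Matrix (Fin k) (Fin k) ℂ :=
  Matrix.of fun i j =>
    if (j : ℕ) = (i : ℕ) + 1 then -1
    else if (j : ℕ) = 0 then
      (if (i : ℕ) + m ≤ p then φ ((i : ℕ) + m) (s + (i : ℕ) + 1) else 0)
    else if (j : ℕ) ≤ (i : ℕ) then
      (if (i : ℕ) - (j : ℕ) + 1 ≤ p then φ ((i : ℕ) - (j : ℕ) + 1) (s + (i : ℕ) + 1)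
        else 0)
    else 0

/-- The fundamental solution `ξ^{(m)}_{t,s}`: the banded Hessenbergian
`det(Φ^{(m)}_{t,s})` for `t > s`; `1` for `t = s - m + 1`; `0` for other
`t ∈ [s - p + 1, s]`. -/
def xi (p : ℕ) (φ : ℕ → ℤ → ℂ) (m : ℕ) (s t : ℤ) : ℂ :=
  if s < t then (Phi p φ m s (t - s).toNat).det
  else if t = s - (m : ℤ) + 1 then 1 else 0


def DD (p : ℕ) (φ : ℕ → ℤ → ℂ) (s : ℤ) (k : ℕ) (r : ℕ) :
    Matrix (Fin k) (Fin k) ℂ :=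
  Matrix.of fun i j =>
    if (i : ℕ) + 1 = k then
      (if k - 1 - (j : ℕ) + 1 + r ≤ p then φ (k - 1 - (j : ℕ) + 1 + r) (s + (k : ℕ) + (r : ℕ)) else 0)
    else Phi p φ 1 s k i j


lemma DD_zero (p : ℕ) (φ : ℕ → ℤ → ℂ) (s : ℤ) (k : ℕ) :
    DD p φ s k 0 = Phi p φ 1 s k := by
  ext i j
  simp only [DD, Phi, Matrix.of_apply]
  by_cases hi : (i : ℕ) + 1 = k
  · have hj1 : ¬ ((j : ℕ) = (i : ℕ) + 1) := by omega
    have hji : (j : ℕ) ≤ (i : ℕ) := by omega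
    rw [if_pos hi, if_neg hj1]
    have harg : s + ((k : ℕ) : ℤ) + ((0:ℕ) : ℤ) = s + ((i : ℕ) : ℤ) + 1 := by push_cast; omega
    by_cases hj0 : (j : ℕ) = 0
    · have h1 : k - 1 - (j : ℕ) + 1 + 0 = (i : ℕ) + 1 := by omega
      rw [if_pos hj0, h1, harg]
    · have h1 : k - 1 - (j : ℕ) + 1 + 0 = (i : ℕ) - (j : ℕ) + 1 := by omega
      rw [if_neg hj0, if_pos hji, h1, harg]
  · rw [if_neg hi]

lemma det_DD_one (p : ℕ) (φ : ℕ → ℤ → ℂ) (s : ℤ) (r : ℕ) :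
    (DD p φ s 1 r).det = if 1 + r ≤ p then φ (1 + r) (s + 1 + (r : ℕ)) else 0 := by
  rw [Matrix.det_fin_one]
  simp [DD]


lemma det_DD_succ (p : ℕ) (φ : ℕ → ℤ → ℂ) (s : ℤ) (k : ℕ) (r : ℕ) (hk : 1 ≤ k) :
    (DD p φ s (k+1) r).det =
      (if 1 + r ≤ p then φ (1 + r) (s + ((k:ℤ)+1) + (r : ℕ)) else 0) * (Phi p φ 1 s k).det
        + (DD p φ s k (r+1)).det := by
  set A := DD p φ s (k+1) r with hA
  rw [Matrix.det_succ_column A (Fin.last k)]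
  set f : Fin (k+1) → ℂ := fun i =>
    (-1) ^ ((i : ℕ) + (Fin.last k : ℕ)) * A i (Fin.last k) *
      (A.submatrix i.succAbove (Fin.last k).succAbove).det with hf
  set a : Fin (k+1) := ⟨k-1, by omega⟩ with ha
  set b : Fin (k+1) := Fin.last k with hb
  have hab : a ≠ b := by
    simp only [ha, hb, Fin.ne_iff_vne, Fin.last]
    omega
  have hzero : ∀ i ∈ Finset.univ, i ∉ ({a, b} : Finset (Fin (k+1))) → f i = 0 := by
    intro i _ hi
    simp only [Finset.mem_insert, Finset.mem_singleton] at hi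
    push_neg at hi
    have h1 : (i : ℕ) < k - 1 := by
      have := i.isLt
      have h2 : (i : ℕ) ≠ k - 1 := fun h => hi.1 (Fin.ext (by simpa using h))
      have h3 : (i : ℕ) ≠ k := fun h => hi.2 (Fin.ext (by simpa [hb, Fin.last] using h))
      omega
    have hAi : A i (Fin.last k) = 0 := by
      simp only [hA, DD, Phi, Matrix.of_apply, Fin.val_last]
      have : ¬ ((i:ℕ) + 1 = k + 1) := by omega
      rw [if_neg this]
      have : ¬ (k = (i:ℕ) + 1) := by omega
      rw [if_neg this]
      have : ¬ (k = 0) := by omega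
      rw [if_neg this]
      have : ¬ (k ≤ (i:ℕ)) := by omega
      rw [if_neg this]
    simp [hf, hb, hAi]
  have hsum := Finset.sum_subset (Finset.subset_univ ({a, b} : Finset (Fin (k+1)))) hzero
  rw [← hsum, Finset.sum_pair hab]
  -- compute f b
  have hfb : f b = (if 1 + r ≤ p then φ (1 + r) (s + ((k:ℤ)+1) + (r : ℕ)) else 0)
      * (Phi p φ 1 s k).det := by
    have hAbb : A b (Fin.last k) =
        (if 1 + r ≤ p then φ (1 + r) (s + ((k:ℤ)+1) + (r : ℕ)) else 0) := by
      simp only [hA, hb, DD, Matrix.of_apply, Fin.val_last, if_true]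
      have h1 : k + 1 - 1 - k + 1 + r = 1 + r := by omega
      have h3 : s + ((k + 1 : ℕ) : ℤ) + ((r : ℕ) : ℤ) = s + ((k:ℤ) + 1) + ((r : ℕ) : ℤ) := by
        push_cast; ring
      rw [h1, h3]
    have hminor : A.submatrix b.succAbove (Fin.last k).succAbove = Phi p φ 1 s k := by
      ext i j
      simp only [hA, hb, Matrix.submatrix_apply, Fin.succAbove_last, DD, Matrix.of_apply,
        Fin.coe_castSucc]
      have : ¬ ((i:ℕ) + 1 = k + 1) := by have := i.isLt; omega
      rw [if_neg this]
      simp only [Phi, Matrix.of_apply, Fin.coe_castSucc]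
    have hsign : ((-1 : ℂ)) ^ ((b : ℕ) + (Fin.last k : ℕ)) = 1 := by
      simp only [hb, Fin.val_last]
      exact Even.neg_one_pow ⟨k, rfl⟩
    simp only [hb] at hsign hAbb hminor
    simp only [hf, hb, hsign, hAbb, hminor, one_mul]
  -- compute f a
  have hfa : f a = (DD p φ s k (r+1)).det := by
    have hAab : A a (Fin.last k) = -1 := by
      simp only [hA, ha, DD, Phi, Matrix.of_apply, Fin.val_last]
      split_ifs <;> first | rfl | omega
    have hminor : A.submatrix a.succAbove (Fin.last k).succAbove = DD p φ s k (r+1) := by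
      ext i j
      simp only [hA, Matrix.submatrix_apply, Fin.succAbove_last, DD, Matrix.of_apply,
        Fin.coe_castSucc]
      by_cases hik : (i : ℕ) + 1 = k
      · have hrow : a.succAbove i = i.succ := by
          rw [Fin.succAbove]
          have : ¬ (i.castSucc < a) := by
            simp only [Fin.lt_iff_val_lt_val, Fin.coe_castSucc, ha]
            omega
          rw [if_neg this]
        rw [hrow]
        simp only [Fin.val_succ]
        have h1 : (i:ℕ) + 1 + 1 = k + 1 := by omega
        rw [if_pos h1, if_pos hik]
        have h2 : k + 1 - 1 - (j:ℕ) + 1 + r = k - 1 - (j:ℕ) + 1 + (r+1) := by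
          have := j.isLt; omega
        have h3 : s + ((k + 1 : ℕ) : ℤ) + ((r:ℕ):ℤ) = s + ((k:ℕ):ℤ) + ((r+1 : ℕ):ℤ) := by
          push_cast; ring
        rw [h2, h3]
      · have hrow : a.succAbove i = i.castSucc := by
          rw [Fin.succAbove]
          have : i.castSucc < a := by
            simp only [Fin.lt_iff_val_lt_val, Fin.coe_castSucc, ha]
            have := i.isLt; omega
          rw [if_pos this]
        rw [hrow]
        simp only [Fin.coe_castSucc]
        have h1 : ¬ ((i:ℕ) + 1 = k + 1) := by omega
        rw [if_neg h1, if_neg hik]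
        simp only [Phi, Matrix.of_apply, Fin.coe_castSucc]
    have hsign : ((-1 : ℂ)) ^ ((a : ℕ) + (Fin.last k : ℕ)) = -1 := by
      simp only [ha, Fin.val_last]
      exact Odd.neg_one_pow ⟨k - 1, by omega⟩
    simp only [hf, hb, hsign, hAab, hminor]
    ring
  rw [hfa, hfb]
  ring



lemma det_DD_formula (p : ℕ) (φ : ℕ → ℤ → ℂ) (s : ℤ) (k : ℕ) (r : ℕ) :
    (DD p φ s (k+1) r).det =
      ∑ i ∈ Finset.Icc 1 (k+1),
        (if i + r ≤ p then φ (i + r) (s + ((k:ℤ)+1) + (r : ℕ)) else 0)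
          * (Phi p φ 1 s (k+1-i)).det := by
  induction k generalizing r with
  | zero =>
    rw [det_DD_one]
    simp [Matrix.det_fin_zero]
  | succ k ih =>
    rw [det_DD_succ p φ s (k+1) r (by omega), ih (r+1)]
    have hset : Finset.Icc 1 (k+1+1) =
        insert 1 (Finset.image (· + 1) (Finset.Icc 1 (k+1))) := by
      ext x
      simp only [Finset.mem_Icc, Finset.mem_insert, Finset.mem_image]
      constructor
      · rintro ⟨h1, h2⟩
        rcases Nat.eq_or_lt_of_le h1 with h | h
        · left; omega
        · right; exact ⟨x - 1, by omega, by omega⟩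
      · rintro (h | ⟨a, ⟨ha1, ha2⟩, rfl⟩) <;> omega
    rw [hset]
    rw [Finset.sum_insert (by
      simp only [Finset.mem_image, Finset.mem_Icc]
      rintro ⟨a, ⟨h1, h2⟩, h3⟩; omega)]
    rw [Finset.sum_image (by intro a _ b _ h; simp only at h; omega)]
    have harg : ∀ (n : ℕ) (c : Prop) [Decidable c] (A B : ℤ), A = B →
        (if c then φ n A else 0) = (if c then φ n B else 0) := by
      intro n c _ A B h; rw [h]
    congr 1
    refine Finset.sum_congr rfl fun i hi => ?_
    simp only [Finset.mem_Icc] at hi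
    have h1 : i + 1 + r = i + (r + 1) := by omega
    have h2 : k + 1 + 1 - (i + 1) = k + 1 - i := by omega
    rw [h1, h2]
    congr 1
    exact harg _ _ _ _ (by push_cast; ring)



lemma det_Phi_formula (p : ℕ) (φ : ℕ → ℤ → ℂ) (s : ℤ) (k : ℕ) (hk : 1 ≤ k) :
    (Phi p φ 1 s k).det =
      ∑ i ∈ Finset.Icc 1 k,
        (if i ≤ p then φ i (s + (k : ℤ)) else 0) * (Phi p φ 1 s (k - i)).det := by
  obtain ⟨k, rfl⟩ : ∃ m, k = m + 1 := ⟨k - 1, by omega⟩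
  rw [← DD_zero, det_DD_formula]
  refine Finset.sum_congr rfl fun i hi => ?_
  congr 2
  push_cast
  ring_nf

lemma xi_of_lt (p : ℕ) (φ : ℕ → ℤ → ℂ) (s t : ℤ) (h : t < s) :
    xi p φ 1 s t = 0 := by
  rw [xi, if_neg (by omega), if_neg (by omega)]

lemma xi_self (p : ℕ) (φ : ℕ → ℤ → ℂ) (s : ℤ) :
    xi p φ 1 s s = 1 := by
  rw [xi, if_neg (by omega), if_pos (by omega)]

lemma xi_rec (p : ℕ) (φ : ℕ → ℤ → ℂ) (s t : ℤ) (h : s < t) :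
    xi p φ 1 s t = ∑ i ∈ Finset.Icc 1 p, φ i t * xi p φ 1 s (t - (i : ℤ)) := by
  set k := (t - s).toNat with hkdef
  have hk : 1 ≤ k := by omega
  have hts : t = s + (k : ℤ) := by omega
  have hxival : ∀ i : ℕ, 1 ≤ i → i ≤ k → xi p φ 1 s (t - (i : ℤ)) = (Phi p φ 1 s (k - i)).det := by
    intro i h1 h2
    rcases Nat.lt_or_ge i k with hik | hik
    · rw [xi, if_pos (by omega)]
      have he : (t - (i : ℤ) - s).toNat = k - i := by omega
      rw [he]
    · have hik' : i = k := by omega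
      rw [hik', show t - (k : ℤ) = s from by omega, xi_self, Nat.sub_self]
      simp [Matrix.det_fin_zero]
  have hxi0 : ∀ i : ℕ, k < i → xi p φ 1 s (t - (i : ℤ)) = 0 := by
    intro i hik
    exact xi_of_lt _ _ _ _ (by omega)
  rw [xi, if_pos h, ← hkdef, det_Phi_formula p φ s k hk]
  set N := max k p with hN
  have hL : ∑ i ∈ Finset.Icc 1 k,
      (if i ≤ p then φ i (s + (k : ℤ)) else 0) * (Phi p φ 1 s (k - i)).det
      = ∑ i ∈ Finset.Icc 1 N,
        (if i ≤ p then φ i t else 0) * (if i ≤ k then (Phi p φ 1 s (k - i)).det else 0) := by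
    have h1 : ∀ i ∈ Finset.Icc 1 k,
        (if i ≤ p then φ i (s + (k : ℤ)) else 0) * (Phi p φ 1 s (k - i)).det
        = (if i ≤ p then φ i t else 0) * (if i ≤ k then (Phi p φ 1 s (k - i)).det else 0) := by
      intro i hi
      simp only [Finset.mem_Icc] at hi
      rw [← hts, if_pos hi.2]
    rw [Finset.sum_congr rfl h1]
    refine Finset.sum_subset (Finset.Icc_subset_Icc_right (le_max_left k p)) ?_
    intro i hmem hni
    simp only [Finset.mem_Icc] at hmem hni
    rw [if_neg (by omega : ¬ i ≤ k), mul_zero]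
  have hR : ∑ i ∈ Finset.Icc 1 p, φ i t * xi p φ 1 s (t - (i : ℤ))
      = ∑ i ∈ Finset.Icc 1 N,
        (if i ≤ p then φ i t else 0) * (if i ≤ k then (Phi p φ 1 s (k - i)).det else 0) := by
    have h1 : ∀ i ∈ Finset.Icc 1 p,
        φ i t * xi p φ 1 s (t - (i : ℤ))
        = (if i ≤ p then φ i t else 0) * (if i ≤ k then (Phi p φ 1 s (k - i)).det else 0) := by
      intro i hi
      simp only [Finset.mem_Icc] at hi
      rw [if_pos hi.2]
      by_cases hik : i ≤ k
      · rw [hxival i hi.1 hik, if_pos hik]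
      · rw [hxi0 i (by omega), if_neg hik, mul_zero]
    rw [Finset.sum_congr rfl h1]
    refine Finset.sum_subset (Finset.Icc_subset_Icc_right (le_max_right k p)) ?_
    intro i hmem hni
    simp only [Finset.mem_Icc] at hmem hni
    rw [if_neg (by omega : ¬ i ≤ p), zero_mul]
  rw [hL, hR]

lemma xi_delta (p : ℕ) (φ : ℕ → ℤ → ℂ) (s t : ℤ) :
    xi p φ 1 s t =
      (∑ i ∈ Finset.Icc 1 p, φ i t * xi p φ 1 s (t - (i : ℤ)))
        + (if t = s then 1 else 0) := by
  rcases lt_trichotomy s t with h | h | h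
  · rw [xi_rec p φ s t h, if_neg (by omega), add_zero]
  · subst h
    rw [xi_self, if_pos rfl]
    have : ∀ i ∈ Finset.Icc 1 p, φ i s * xi p φ 1 s (s - (i : ℤ)) = 0 := by
      intro i hi
      simp only [Finset.mem_Icc] at hi
      rw [xi_of_lt _ _ _ _ (by omega), mul_zero]
    rw [Finset.sum_congr rfl this, Finset.sum_const_zero, zero_add]
  · rw [xi_of_lt _ _ _ _ h, if_neg (by omega)]
    have : ∀ i ∈ Finset.Icc 1 p, φ i t * xi p φ 1 s (t - (i : ℤ)) = 0 := by
      intro i hi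
      simp only [Finset.mem_Icc] at hi
      rw [xi_of_lt _ _ _ _ (by omega), mul_zero]
    rw [Finset.sum_congr rfl this, Finset.sum_const_zero, add_zero]



/-- Green's function representation of the general solution of the nonhomogeneous
equation `y_t = Σ_{i=1}^p φ_i(t) y_{t-i} + v_t`:
`y_t = Σ_{m=1}^p Σ_{j=1}^{p-m+1} φ_{m+j-1}(s+j) ξ_{t,s+j} y_{s-m+1}
      + Σ_{j=1}^{t-s} ξ_{t,s+j} v_{s+j}` for all `t > s`. -/

theorem stmt19 (p : ℕ) (hp : 1 ≤ p) (φ : ℕ → ℤ → ℂ) (v : ℤ → ℂ) (s : ℤ)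
    (y : ℤ → ℂ)
    (hy : ∀ t : ℤ, s < t →
      y t = (∑ i ∈ Finset.Icc 1 p, φ i t * y (t - (i : ℤ))) + v t) :
    ∀ t : ℤ, s < t →
      y t =
        (∑ m ∈ Finset.Icc 1 p, ∑ j ∈ Finset.Icc 1 (p - m + 1),
          φ (m + j - 1) (s + (j : ℤ)) * xi p φ 1 (s + (j : ℤ)) t * y (s - (m : ℤ) + 1))
        + ∑ j ∈ Finset.Icc 1 (t - s).toNat, xi p φ 1 (s + (j : ℤ)) t * v (s + (j : ℤ)) := by
  have key : ∀ n : ℕ, ∀ t : ℤ, s < t → (t - s).toNat ≤ n →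
      y t =
        (∑ m ∈ Finset.Icc 1 p, ∑ j ∈ Finset.Icc 1 (p - m + 1),
          φ (m + j - 1) (s + (j : ℤ)) * xi p φ 1 (s + (j : ℤ)) t * y (s - (m : ℤ) + 1))
        + ∑ j ∈ Finset.Icc 1 (t - s).toNat, xi p φ 1 (s + (j : ℤ)) t * v (s + (j : ℤ)) := by
    intro n
    induction n with
    | zero => intro t ht h0; omega
    | succ n ih =>
      intro t ht hn
      obtain ⟨K, hKdef⟩ : ∃ K : ℕ, (t - s).toNat = K := ⟨_, rfl⟩
      rw [hKdef] at hn ⊢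
      have hK1 : 1 ≤ K := by omega
      have htK : t = s + (K : ℤ) := by omega
      set A : ℤ → ℂ := fun u => ∑ m ∈ Finset.Icc 1 p, ∑ j ∈ Finset.Icc 1 (p - m + 1),
          φ (m + j - 1) (s + (j : ℤ)) * xi p φ 1 (s + (j : ℤ)) u * y (s - (m : ℤ) + 1) with hA
      set B : ℤ → ℂ := fun u => ∑ j ∈ Finset.Icc 1 K,
          xi p φ 1 (s + (j : ℤ)) u * v (s + (j : ℤ)) with hB
      show y t = A t + B t
      have hIH : ∀ u : ℤ, s < u → u < t → y u = A u + B u := by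
        intro u hsu hut
        rw [ih u hsu (by omega)]
        simp only [hA, hB]
        congr 1
        refine Finset.sum_subset
          (Finset.Icc_subset_Icc_right (by omega : (u - s).toNat ≤ K)) ?_
        intro j hmem hni
        simp only [Finset.mem_Icc] at hmem hni
        rw [xi_of_lt p φ (s + (j : ℤ)) u (by omega), zero_mul]
      have hF0 : ∀ u : ℤ, u ≤ s → A u + B u = 0 := by
        intro u hu
        simp only [hA, hB]
        have h1 : (∑ m ∈ Finset.Icc 1 p, ∑ j ∈ Finset.Icc 1 (p - m + 1),
            φ (m + j - 1) (s + (j : ℤ)) * xi p φ 1 (s + (j : ℤ)) u * y (s - (m : ℤ) + 1)) = 0 :=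
          Finset.sum_eq_zero fun m hm => Finset.sum_eq_zero fun j hj => by
            simp only [Finset.mem_Icc] at hj
            rw [xi_of_lt p φ (s + (j : ℤ)) u (by omega), mul_zero, zero_mul]
        have h2 : (∑ j ∈ Finset.Icc 1 K,
            xi p φ 1 (s + (j : ℤ)) u * v (s + (j : ℤ))) = 0 :=
          Finset.sum_eq_zero fun j hj => by
            simp only [Finset.mem_Icc] at hj
            rw [xi_of_lt p φ (s + (j : ℤ)) u (by omega), zero_mul]
        rw [h1, h2, add_zero]
      have hxidel : ∀ j : ℕ,
          (∑ i ∈ Finset.Icc 1 p, φ i t * xi p φ 1 (s + (j : ℤ)) (t - (i : ℤ)))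
            = xi p φ 1 (s + (j : ℤ)) t - (if t = s + (j : ℤ) then 1 else 0) := by
        intro j
        have h := xi_delta p φ (s + (j : ℤ)) t
        rw [eq_sub_iff_add_eq, ← h]
      -- the delta sum
      set Δ : ℂ := ∑ m ∈ Finset.Icc 1 p,
          (if K ≤ p - m + 1 then φ (m + K - 1) t * y (s - (m : ℤ) + 1) else 0) with hΔ
      have hSA : ∑ i ∈ Finset.Icc 1 p, φ i t * A (t - (i : ℤ)) = A t - Δ := by
        have step1 : ∑ i ∈ Finset.Icc 1 p, φ i t * A (t - (i : ℤ))
            = ∑ m ∈ Finset.Icc 1 p, ∑ j ∈ Finset.Icc 1 (p - m + 1),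
              φ (m + j - 1) (s + (j : ℤ))
                * (xi p φ 1 (s + (j : ℤ)) t - (if t = s + (j : ℤ) then 1 else 0))
                * y (s - (m : ℤ) + 1) := by
          simp only [hA, Finset.mul_sum]
          rw [Finset.sum_comm]
          refine Finset.sum_congr rfl fun m _ => ?_
          rw [Finset.sum_comm]
          refine Finset.sum_congr rfl fun j _ => ?_
          rw [← hxidel j, Finset.mul_sum, Finset.sum_mul]
          refine Finset.sum_congr rfl fun i _ => ?_
          ring
        rw [step1, hΔ, hA]
        rw [← Finset.sum_sub_distrib]
        refine Finset.sum_congr rfl fun m hm => ?_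
        have expand : ∀ j ∈ Finset.Icc 1 (p - m + 1),
            φ (m + j - 1) (s + (j : ℤ))
              * (xi p φ 1 (s + (j : ℤ)) t - (if t = s + (j : ℤ) then 1 else 0))
              * y (s - (m : ℤ) + 1)
            = φ (m + j - 1) (s + (j : ℤ)) * xi p φ 1 (s + (j : ℤ)) t * y (s - (m : ℤ) + 1)
              - (if j = K then φ (m + j - 1) (s + (j : ℤ)) * y (s - (m : ℤ) + 1) else 0) := by
          intro j hj
          have hδ : (if t = s + (j : ℤ) then (1 : ℂ) else 0) = (if j = K then 1 else 0) := by
            by_cases hjK : j = K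
            · rw [if_pos hjK, if_pos (by omega : t = s + (j : ℤ))]
            · rw [if_neg hjK, if_neg (by omega : ¬ t = s + (j : ℤ))]
          rw [hδ]
          by_cases hjK : j = K
          · rw [if_pos hjK, if_pos hjK]; ring
          · rw [if_neg hjK, if_neg hjK]; ring
        rw [Finset.sum_congr rfl expand, Finset.sum_sub_distrib]
        congr 1
        rw [Finset.sum_ite_eq' (Finset.Icc 1 (p - m + 1)) K
          (fun j => φ (m + j - 1) (s + (j : ℤ)) * y (s - (m : ℤ) + 1))]
        by_cases hc : K ≤ p - m + 1
        · rw [if_pos (by simp only [Finset.mem_Icc]; omega : K ∈ Finset.Icc 1 (p - m + 1)),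
            if_pos hc, ← htK]
        · rw [if_neg (by simp only [Finset.mem_Icc]; omega : ¬ K ∈ Finset.Icc 1 (p - m + 1)),
            if_neg hc]
      have hSB : ∑ i ∈ Finset.Icc 1 p, φ i t * B (t - (i : ℤ)) = B t - v t := by
        have step1 : ∑ i ∈ Finset.Icc 1 p, φ i t * B (t - (i : ℤ))
            = ∑ j ∈ Finset.Icc 1 K,
              (xi p φ 1 (s + (j : ℤ)) t - (if t = s + (j : ℤ) then 1 else 0)) * v (s + (j : ℤ)) := by
          simp only [hB, Finset.mul_sum]
          rw [Finset.sum_comm]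
          refine Finset.sum_congr rfl fun j _ => ?_
          rw [← hxidel j, Finset.sum_mul]
          refine Finset.sum_congr rfl fun i _ => ?_
          ring
        rw [step1, hB]
        have expand : ∀ j ∈ Finset.Icc 1 K,
            (xi p φ 1 (s + (j : ℤ)) t - (if t = s + (j : ℤ) then 1 else 0)) * v (s + (j : ℤ))
            = xi p φ 1 (s + (j : ℤ)) t * v (s + (j : ℤ))
              - (if j = K then v (s + (j : ℤ)) else 0) := by
          intro j hj
          have hδ : (if t = s + (j : ℤ) then (1 : ℂ) else 0) = (if j = K then 1 else 0) := by
            by_cases hjK : j = K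
            · rw [if_pos hjK, if_pos (by omega : t = s + (j : ℤ))]
            · rw [if_neg hjK, if_neg (by omega : ¬ t = s + (j : ℤ))]
          rw [hδ]
          by_cases hjK : j = K
          · rw [if_pos hjK, if_pos hjK]; ring
          · rw [if_neg hjK, if_neg hjK]; ring
        rw [Finset.sum_congr rfl expand, Finset.sum_sub_distrib]
        congr 1
        rw [Finset.sum_ite_eq' (Finset.Icc 1 K) K (fun j => v (s + (j : ℤ)))]
        rw [if_pos (by simp only [Finset.mem_Icc]; omega : K ∈ Finset.Icc 1 K), ← htK]
      have hD : ∑ i ∈ Finset.Icc 1 p,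
          (if s < t - (i : ℤ) then 0 else φ i t * y (t - (i : ℤ))) = Δ := by
        rw [hΔ]
        have e1 : ∀ i ∈ Finset.Icc 1 p,
            (if s < t - (i : ℤ) then (0:ℂ) else φ i t * y (t - (i : ℤ)))
            = (if K ≤ i then φ i t * y (t - (i : ℤ)) else 0) := by
          intro i hi
          by_cases hc : K ≤ i
          · rw [if_pos hc, if_neg (by omega : ¬ s < t - (i : ℤ))]
          · rw [if_neg hc, if_pos (by omega : s < t - (i : ℤ))]
        rw [Finset.sum_congr rfl e1, ← Finset.sum_filter, ← Finset.sum_filter]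
        have hi : ∀ a ∈ Finset.filter (fun i => K ≤ i) (Finset.Icc 1 p),
            a - K + 1 ∈ Finset.filter (fun m => K ≤ p - m + 1) (Finset.Icc 1 p) := by
          intro a ha
          simp only [Finset.mem_filter, Finset.mem_Icc] at ha ⊢
          omega
        have hj : ∀ a ∈ Finset.filter (fun m => K ≤ p - m + 1) (Finset.Icc 1 p),
            a + K - 1 ∈ Finset.filter (fun i => K ≤ i) (Finset.Icc 1 p) := by
          intro a ha
          simp only [Finset.mem_filter, Finset.mem_Icc] at ha ⊢
          omega
        have hli : ∀ a ∈ Finset.filter (fun i => K ≤ i) (Finset.Icc 1 p),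
            a - K + 1 + K - 1 = a := by
          intro a ha
          simp only [Finset.mem_filter, Finset.mem_Icc] at ha
          omega
        have hri : ∀ a ∈ Finset.filter (fun m => K ≤ p - m + 1) (Finset.Icc 1 p),
            a + K - 1 - K + 1 = a := by
          intro a ha
          simp only [Finset.mem_filter, Finset.mem_Icc] at ha
          omega
        have hval : ∀ a ∈ Finset.filter (fun i => K ≤ i) (Finset.Icc 1 p),
            φ a t * y (t - (a : ℤ))
              = φ (a - K + 1 + K - 1) t * y (s - ((a - K + 1 : ℕ) : ℤ) + 1) := by
          intro a ha
          simp only [Finset.mem_filter, Finset.mem_Icc] at ha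
          have h1 : a - K + 1 + K - 1 = a := by omega
          have h2 : s - ((a - K + 1 : ℕ) : ℤ) + 1 = t - (a : ℤ) := by omega
          rw [h1, h2]
        exact Finset.sum_nbij' (fun a => a - K + 1) (fun a => a + K - 1)
          hi hj hli hri hval
      -- final assembly
      rw [hy t ht]
      have e1 : ∀ i ∈ Finset.Icc 1 p, φ i t * y (t - (i : ℤ))
          = (φ i t * A (t - (i : ℤ)) + φ i t * B (t - (i : ℤ)))
            + (if s < t - (i : ℤ) then 0 else φ i t * y (t - (i : ℤ))) := by
        intro i hi
        simp only [Finset.mem_Icc] at hi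
        by_cases hc : s < t - (i : ℤ)
        · rw [if_pos hc, hIH (t - (i : ℤ)) hc (by omega), add_zero]
          ring
        · rw [if_neg hc]
          have h0 : A (t - (i : ℤ)) + B (t - (i : ℤ)) = 0 := hF0 _ (by omega)
          have h1 : φ i t * A (t - (i : ℤ)) + φ i t * B (t - (i : ℤ)) = 0 := by
            rw [← mul_add, h0, mul_zero]
          rw [h1, zero_add]
      rw [Finset.sum_congr rfl e1, Finset.sum_add_distrib, Finset.sum_add_distrib,
        hSA, hSB, hD]
      ring
  intro t ht
  exact key (t - s).toNat t ht le_rfl
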